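/- If H is a graph containing an odd cycle, then t(H, BIP_{0,1}) = 0, where BIP_{0,1}(x,y) equals 0 on [0,1/2]²∪(1/2,1]² and 1 elsewhere. Consequently, for the graphon W = BIP_{0,1}, E[h(W)] = h(0)/2 + h(1)/2 = 1/2, and thus the constant graphon r does not minimize LT(H, r) whenever h(r) > 1/2, in particular for all r < 0.186. -/

import Mathlib

/-! If `x : V → ℝ` gives every edge of `H` a nonzero `BIP 0 b`-weight, then colouring a vertex
by whether `x v ≤ 1/2` is a proper 2-colouring; so for non-bipartite `H` the integrand of
`t(H, BIP 0 1)` vanishes identically. Since `h 0 = 1` and `h 1 = 0`, `h ∘ BIP 0 1 = BIP 1 0`,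
which has mean `1/2`. Finally `h` is convex with `h' = log`, hence decreasing on `(0, 1]`, and
`h 0.186 > 1/2`. -/

open MeasureTheory Real

noncomputable section

def I01 : Set ℝ := Set.Icc 0 1

/-- The bipartite-structured graphon: `a` on `[0,1/2]² ∪ (1/2,1]²` and `b` elsewhere. -/
def BIP (a b : ℝ) (x y : ℝ) : ℝ := if (x ≤ 1 / 2 ↔ y ≤ 1 / 2) then a else b

lemma BIP_symm (a b : ℝ) : ∀ x y : ℝ, BIP a b x y = BIP a b y x := by
  intro x y
  simp only [BIP, iff_comm]

/-- The `H`-density `t(H, W)` of a symmetric kernel `W`, integrating over `[0,1]^{V(H)}`. -/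
def tH {V : Type*} [Fintype V] [DecidableEq V] (H : SimpleGraph V) [DecidableRel H.Adj]
    (W : ℝ → ℝ → ℝ) (hW : ∀ x y, W x y = W y x) : ℝ :=
  ∫ x : V → ℝ,
      (∏ e ∈ H.edgeFinset,
        Sym2.lift ⟨fun i j => W (x i) (x j), fun i j => hW (x i) (x j)⟩ e)
    ∂(Measure.pi fun _ => volume.restrict I01)

/-- The function `h(x) = x log x - x + 1` (with `h(0) = 1` since `Real.log 0 = 0`). -/
def hfun (x : ℝ) : ℝ := x * Real.log x - x + 1

lemma colorable_two_of_prod_BIP_ne_zero {V : Type*} [Fintype V] [DecidableEq V]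
    (H : SimpleGraph V) [DecidableRel H.Adj] (b : ℝ) (x : V → ℝ)
    (h : ∏ e ∈ H.edgeFinset,
        Sym2.lift ⟨fun i j => BIP 0 b (x i) (x j), fun i j => BIP_symm 0 b (x i) (x j)⟩ e
      ≠ 0) :
    H.Colorable 2 := by
  have hcol : H.Coloring Prop :=
    SimpleGraph.Coloring.mk (fun v => x v ≤ 1 / 2) fun {v w} hvw hside => by
      have hedge := Finset.prod_ne_zero_iff.mp h s(v, w) (H.mem_edgeFinset.mpr hvw)
      rw [Sym2.lift_mk] at hedge
      simp only [BIP, hside, iff_self, if_true] at hedge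
      exact hedge rfl
  simpa using hcol.colorable

lemma tH_BIP_zero_eq_zero {V : Type*} [Fintype V] [DecidableEq V]
    (H : SimpleGraph V) [DecidableRel H.Adj] (b : ℝ) (hodd : ¬ H.Colorable 2) :
    tH H (BIP 0 b) (BIP_symm 0 b) = 0 := by
  have hprod : ∀ x : V → ℝ, ∏ e ∈ H.edgeFinset,
      Sym2.lift ⟨fun i j => BIP 0 b (x i) (x j), fun i j => BIP_symm 0 b (x i) (x j)⟩ e = 0 :=
    fun x => by_contra fun h => hodd (colorable_two_of_prod_BIP_ne_zero H b x h)
  simp only [tH, hprod, integral_zero]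

instance isFiniteMeasure_restrict_I01 : IsFiniteMeasure (volume.restrict I01) := by
  rw [I01]; infer_instance

lemma volume_real_Iic_inter_I01 : volume.real (Set.Iic (1 / 2 : ℝ) ∩ I01) = 1 / 2 := by
  have : Set.Iic (1 / 2 : ℝ) ∩ I01 = Set.Icc 0 (1 / 2) := by
    ext y; simp only [I01, Set.mem_inter_iff, Set.mem_Iic, Set.mem_Icc]; grind
  rw [this, Real.volume_real_Icc]; norm_num

lemma volume_real_Ioi_inter_I01 : volume.real (Set.Ioi (1 / 2 : ℝ) ∩ I01) = 1 / 2 := by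
  have : Set.Ioi (1 / 2 : ℝ) ∩ I01 = Set.Ioc (1 / 2) 1 := by
    ext y; simp only [I01, Set.mem_inter_iff, Set.mem_Ioi, Set.mem_Icc, Set.mem_Ioc]; grind
  rw [this, Real.volume_real_Ioc]; norm_num

lemma integral_piecewise_Iic_half (a b : ℝ) :
    ∫ y in I01, (Set.Iic (1 / 2)).piecewise (fun _ => a) (fun _ => b) y = (a + b) / 2 := by
  rw [integral_piecewise measurableSet_Iic (integrableOn_const ..) (integrableOn_const ..),
    Set.compl_Iic, setIntegral_const, setIntegral_const,
    measureReal_restrict_apply measurableSet_Iic, measureReal_restrict_apply measurableSet_Ioi,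
    volume_real_Iic_inter_I01, volume_real_Ioi_inter_I01]
  simp only [smul_eq_mul]
  ring

lemma integral_BIP (a b x : ℝ) : ∫ y in I01, BIP a b x y = (a + b) / 2 := by
  by_cases hx : x ≤ 1 / 2
  · have hrow : BIP a b x = (Set.Iic (1 / 2)).piecewise (fun _ => a) (fun _ => b) :=
      funext fun y => by unfold BIP Set.piecewise; simp only [Set.mem_Iic]; split_ifs <;> tauto
    rw [hrow, integral_piecewise_Iic_half]
  · have hrow : BIP a b x = (Set.Iic (1 / 2)).piecewise (fun _ => b) (fun _ => a) :=
      funext fun y => by unfold BIP Set.piecewise; simp only [Set.mem_Iic]; split_ifs <;> tauto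
    rw [hrow, integral_piecewise_Iic_half, add_comm]

lemma apply_BIP (f : ℝ → ℝ) (a b x y : ℝ) : f (BIP a b x y) = BIP (f a) (f b) x y :=
  apply_ite f _ a b

@[simp] lemma hfun_zero : hfun 0 = 1 := by simp [hfun]

@[simp] lemma hfun_one : hfun 1 = 0 := by simp [hfun]

lemma integral_integral_hfun_BIP_zero_one :
    ∫ x in I01, ∫ y in I01, hfun (BIP 0 1 x y) = 1 / 2 := by
  simp only [apply_BIP hfun, hfun_zero, hfun_one, integral_BIP]
  simp [I01]

lemma hfun_add_log_mul_sub_le {r c : ℝ} (hr : 0 < r) (hc : 0 < c) :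
    hfun c + Real.log c * (r - c) ≤ hfun r := by
  have hlog : Real.log (c / r) ≤ c / r - 1 := Real.log_le_sub_one_of_pos (by positivity)
  have key : r * (Real.log c - Real.log r) ≤ c - r := by
    have := mul_le_mul_of_nonneg_left hlog hr.le
    rwa [Real.log_div hc.ne' hr.ne', mul_sub r (c / r), mul_div_cancel₀ _ hr.ne', mul_one] at this
  unfold hfun; nlinarith

lemma hfun_le_hfun_of_le {r c : ℝ} (hr : 0 < r) (hrc : r ≤ c) (hc : c ≤ 1) :
    hfun c ≤ hfun r := by
  have hlog : Real.log c ≤ 0 := Real.log_nonpos (hr.trans_le hrc).le hc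
  nlinarith [hfun_add_log_mul_sub_le hr (hr.trans_le hrc)]

/-- `h 0.186 > 1/2` amounts to `log 0.186 > -0.314 / 0.186 ≈ -1.6882`. -/
lemma neg_le_log_0186 : -1.685 ≤ Real.log 0.186 := by
  rw [Real.le_log_iff_exp_le (by norm_num), Real.exp_neg,
    inv_le_comm₀ (Real.exp_pos _) (by norm_num)]
  refine le_trans ?_ (Real.sum_le_exp_of_nonneg (by norm_num) 8)
  norm_num [Finset.sum_range_succ, Nat.factorial]

lemma one_half_lt_hfun_0186 : 1 / 2 < hfun 0.186 := by
  have := neg_le_log_0186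
  unfold hfun; nlinarith

theorem stmt_17 {V : Type*} [Fintype V] [DecidableEq V]
    (H : SimpleGraph V) [DecidableRel H.Adj]
    (hodd : ¬ H.Colorable 2) :
    tH H (BIP 0 1) (BIP_symm 0 1) = 0 ∧
      (∫ x in I01, ∫ y in I01, hfun (BIP 0 1 x y)) = 1 / 2 ∧
      (∀ r : ℝ, 0 ≤ r → hfun r > 1 / 2 →
        (∫ x in I01, ∫ y in I01, hfun (BIP 0 1 x y)) < hfun r ∧
          tH H (BIP 0 1) (BIP_symm 0 1) ≤ r ^ H.edgeFinset.card) ∧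
      (∀ r : ℝ, 0 < r → r < 0.186 →
        (∫ x in I01, ∫ y in I01, hfun (BIP 0 1 x y)) < hfun r ∧
          tH H (BIP 0 1) (BIP_symm 0 1) ≤ r ^ H.edgeFinset.card) := by
  have ht := tH_BIP_zero_eq_zero H 1 hodd
  have hint := integral_integral_hfun_BIP_zero_one
  have hbeats : ∀ r : ℝ, 0 ≤ r → hfun r > 1 / 2 →
      (∫ x in I01, ∫ y in I01, hfun (BIP 0 1 x y)) < hfun r ∧
        tH H (BIP 0 1) (BIP_symm 0 1) ≤ r ^ H.edgeFinset.card :=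
    fun r hr hhr => ⟨hint.trans_lt hhr, ht.trans_le (pow_nonneg hr _)⟩
  refine ⟨ht, hint, hbeats, fun r hr hr' => hbeats r hr.le ?_⟩
  exact one_half_lt_hfun_0186.trans_le (hfun_le_hfun_of_le hr hr'.le (by norm_num))
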